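/- Let d ≥ 1, let H = (V, E) be a d-sparse finite graph, let 𝒳 be its d-critical cover, and let W ∈ Θ_k(𝒳) for some 0 ≤ k ≤ d − 1. Suppose every d-critical component of H whose vertex set contains W has at least d + 2 vertices. Then (d − k) · Σ_{U ∈ Θ_{k+1}(𝒳), W ⊂ U} (d_𝒳(U) − 1) − Σ_{U ∈ Θ_{k+2}(𝒳), W ⊂ U} (d_𝒳(U) − 1) < binom(d+1−k, 2) · (d_𝒳(W) − 1). -/

import Mathlib

open Finset
open scoped Classical

variable {α : Type*} [DecidableEq α]

/-- The set of edges of `E` with both endpoints in `X`. -/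
noncomputable def inducedEdges (E : Finset (Sym2 α)) (X : Finset α) : Finset (Sym2 α) :=
  E.filter fun e => ∀ v ∈ e, v ∈ X

/-- `i_G(X)`: the number of edges of `E` with both endpoints in `X`. -/
noncomputable def iG (E : Finset (Sym2 α)) (X : Finset α) : ℕ :=
  (inducedEdges E X).card

/-- `E` is a valid edge set on the vertex set `V`: edges are loopless and join vertices of `V`. -/
def ValidOn (V : Finset α) (E : Finset (Sym2 α)) : Prop :=
  ∀ e ∈ E, ¬ e.IsDiag ∧ ∀ v ∈ e, v ∈ V

/-- The graph `(V, E)` is `d`-sparse: every `X ⊆ V` with `|X| ≥ d` satisfies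
`i(X) ≤ d|X| - (d+1 choose 2)`. -/
noncomputable def Sparse (d : ℕ) (V : Finset α) (E : Finset (Sym2 α)) : Prop :=
  ∀ X ⊆ V, d ≤ X.card → iG E X + Nat.choose (d + 1) 2 ≤ d * X.card

/-- `(U, F)` is a subgraph of `(V, E)`. -/
def IsSubgraph (V : Finset α) (E : Finset (Sym2 α)) (U : Finset α) (F : Finset (Sym2 α)) :
    Prop :=
  U ⊆ V ∧ F ⊆ E ∧ ∀ e ∈ F, ∀ v ∈ e, v ∈ U

/-- The graph `(U, F)` is `d`-critical: either `|U| = 2` and `|F| = 1`, or `|U| ≥ d + 2` and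
`|F| = d|U| - (d+1 choose 2)`. -/
def Critical (d : ℕ) (U : Finset α) (F : Finset (Sym2 α)) : Prop :=
  (U.card = 2 ∧ F.card = 1) ∨
  (d + 2 ≤ U.card ∧ F.card + Nat.choose (d + 1) 2 = d * U.card)

/-- `(U, F)` is a `d`-critical subgraph of `(V, E)`. -/
def CritSubgraph (d : ℕ) (V : Finset α) (E : Finset (Sym2 α)) (U : Finset α)
    (F : Finset (Sym2 α)) : Prop :=
  IsSubgraph V E U F ∧ Critical d U F

/-- `(U, F)` is a `d`-critical component of `(V, E)`: a `d`-critical subgraph not properly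
contained in any other `d`-critical subgraph. -/
def CritComponent (d : ℕ) (V : Finset α) (E : Finset (Sym2 α)) (U : Finset α)
    (F : Finset (Sym2 α)) : Prop :=
  CritSubgraph d V E U F ∧
  ∀ U' F', CritSubgraph d V E U' F' → U ⊆ U' → F ⊆ F' → U = U' ∧ F = F'

/-- The `d`-critical cover of `(V, E)`: the family of vertex sets of its `d`-critical
components. -/
noncomputable def critCover (d : ℕ) (V : Finset α) (E : Finset (Sym2 α)) :
    Finset (Finset α) :=
  V.powerset.filter fun U => ∃ F, CritComponent d V E U F

/-- `d_𝒳(W)`: the number of members of the family `𝒳` containing `W`. -/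
def degX (𝒳 : Finset (Finset α)) (W : Finset α) : ℕ :=
  (𝒳.filter fun X => W ⊆ X).card

/-- `Θ_k(𝒳)`: the set of `k`-hinges of `𝒳`, i.e. `k`-element subsets of `V` lying in at least
two members of `𝒳`.  (For `k = 0` this is `{∅}` exactly when `|𝒳| ≥ 2`.) -/
noncomputable def theta (V : Finset α) (𝒳 : Finset (Finset α)) (k : ℕ) :
    Finset (Finset α) :=
  V.powerset.filter fun W => W.card = k ∧ 2 ≤ degX 𝒳 W

/-- `𝒳` is a cover of `(V, E)`: every member has at least two vertices and every edge is
induced by some member. -/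
def IsCover (E : Finset (Sym2 α)) (𝒳 : Finset (Finset α)) : Prop :=
  (∀ X ∈ 𝒳, 2 ≤ X.card) ∧ ∀ e ∈ E, ∃ X ∈ 𝒳, ∀ v ∈ e, v ∈ X

/-- `𝒳` is `t`-thin: any two distinct members intersect in at most `t` vertices. -/
def Thin (t : ℕ) (𝒳 : Finset (Finset α)) : Prop :=
  ∀ X ∈ 𝒳, ∀ Y ∈ 𝒳, X ≠ Y → (X ∩ Y).card ≤ t

/-- `(V, F)` is a maximal `d`-sparse (spanning) subgraph of `(V, E)`. -/
noncomputable def MaxSparse (d : ℕ) (V : Finset α) (E F : Finset (Sym2 α)) : Prop :=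
  F ⊆ E ∧ Sparse d V F ∧ ∀ e ∈ E, e ∉ F → ¬ Sparse d V (insert e F)

/-
Let `𝒴` be the members of `𝒳` containing `W`, `m = |𝒴|`, and `Y` their union. Every `X ∈ 𝒴` is
a component with `i(X) = d|X| - C`, `C = binom(d+1, 2)`, whereas `Y` contains two distinct
components and so is not critical: `i(Y) ≤ d|Y| - C - 1`. Double counting vertices and edges over
`𝒴` turns this into a lower bound `dk(m-1) + dA - (m-1)C + 1` for the edge excess
`Σ_e (d_𝒴(e) - 1)`, where `A = Σ_{v ∈ Y \ W} (d_𝒴(v) - 1)`. Sorting the edges by their endpoints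
in `W` bounds the same excess from above: edges inside `W` give at most `binom(k,2)(m-1)`, edges
`wv` with `w ∈ W`, `v ∉ W` at most `kA`, and edges `e` avoiding `W` at most the `(k+2)`-hinge
sum, because `W ∪ e` is a hinge of the same degree. The `(k+1)`-hinges above `W` are the sets
`W ∪ {v}`, so their sum is at most `A`, and the identity
`binom(k,2) + binom(d+1,2) = dk + binom(d+1-k,2)` combines the two bounds.
-/
set_option linter.unusedSectionVars false

namespace Finset

variable {ι κ M : Type*} [AddCommMonoid M] [PartialOrder M] [IsOrderedAddMonoid M]
  {s : Finset ι} {t : Finset κ} {f : ι → M} {g : κ → M}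

theorem sum_le_sum_of_injOn (i : ι → κ) (hi : Set.InjOn i s) (hst : Set.MapsTo i s t)
    (hg : ∀ j ∈ t, 0 ≤ g j) (hfg : ∀ a ∈ s, f a ≤ g (i a)) :
    ∑ a ∈ s, f a ≤ ∑ j ∈ t, g j := by
  classical
  calc ∑ a ∈ s, f a ≤ ∑ a ∈ s, g (i a) := sum_le_sum hfg
    _ = ∑ j ∈ s.image i, g j := (sum_image hi).symm
    _ ≤ ∑ j ∈ t, g j :=
      sum_le_sum_of_subset_of_nonneg (image_subset_iff.2 hst) fun j hj _ => hg j hj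

theorem sum_le_sum_of_forall_exists (π : κ → ι) (h : ∀ a ∈ s, ∃ j ∈ t, π j = a ∧ f a ≤ g j)
    (hg : ∀ j ∈ t, 0 ≤ g j) :
    ∑ a ∈ s, f a ≤ ∑ j ∈ t, g j := by
  obtain rfl | ⟨a₀, ha₀⟩ := s.eq_empty_or_nonempty
  · simpa using sum_nonneg hg
  have : Nonempty κ := let ⟨j, _⟩ := h a₀ ha₀; ⟨j⟩
  choose! i hit hπ hfg using h
  refine sum_le_sum_of_injOn i (fun a ha b hb hab => ?_) hit hg hfg
  rw [← hπ a ha, ← hπ b hb, hab]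

end Finset

theorem Sym2.toFinset_inj {e e' : Sym2 α} : e.toFinset = e'.toFinset ↔ e = e' :=
  ⟨fun h => Sym2.ext fun a => by rw [← mem_toFinset, h, mem_toFinset], congrArg _⟩

theorem Nat.choose_two_add_choose_two {d k : ℕ} (hk : k ≤ d) :
    k.choose 2 + (d + 1).choose 2 = d * k + (d + 1 - k).choose 2 := by
  obtain ⟨j, rfl⟩ := Nat.exists_eq_add_of_le hk
  rw [show k + j + 1 - k = j + 1 by omega]
  apply Nat.cast_injective (R := ℚ)
  push_cast [Nat.cast_choose_two]
  ring

section DegX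

variable {𝒳 𝒴 : Finset (Finset α)} {S S' W X : Finset α} {E : Finset (Sym2 α)} {v : α}

theorem mem_inducedEdges {e : Sym2 α} : e ∈ inducedEdges E X ↔ e ∈ E ∧ e.toFinset ⊆ X := by
  simp [inducedEdges, subset_iff]

theorem mem_sup_inducedEdges {e : Sym2 α} :
    e ∈ 𝒴.sup (inducedEdges E) ↔ e ∈ E ∧ ∃ X ∈ 𝒴, e.toFinset ⊆ X := by
  simp only [mem_sup, mem_inducedEdges]
  grind

theorem inducedEdges_mono (h : X ⊆ S) : inducedEdges E X ⊆ inducedEdges E S := fun _ he =>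
  mem_inducedEdges.2 ⟨(mem_inducedEdges.1 he).1, (mem_inducedEdges.1 he).2.trans h⟩

theorem degX_le_card : degX 𝒳 S ≤ #𝒳 := card_filter_le _ _

theorem degX_anti (h : S ⊆ S') : degX 𝒳 S' ≤ degX 𝒳 S :=
  card_le_card <| monotone_filter_right _ fun _ _ hX => h.trans hX

theorem degX_pos (hX : X ∈ 𝒳) (hS : S ⊆ X) : 0 < degX 𝒳 S :=
  card_pos.2 ⟨X, mem_filter.2 ⟨hX, hS⟩⟩

theorem exists_mem_of_degX_pos (h : 0 < degX 𝒳 S) : ∃ X ∈ 𝒳, S ⊆ X :=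
  let ⟨X, hX⟩ := card_pos.1 h; ⟨X, mem_filter.1 hX⟩

theorem degX_filter_superset : degX (𝒳.filter (W ⊆ ·)) S = degX 𝒳 (S ∪ W) := by
  simp only [degX, filter_filter, union_subset_iff, and_comm]

theorem one_le_degX_singleton (hv : v ∈ 𝒴.sup id) : 1 ≤ degX 𝒴 {v} := by
  obtain ⟨X, hX, hvX⟩ := mem_sup.1 hv
  exact degX_pos hX (singleton_subset_iff.2 hvX)

theorem one_le_degX_toFinset {e : Sym2 α} (he : e ∈ 𝒴.sup (inducedEdges E)) :
    1 ≤ degX 𝒴 e.toFinset := by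
  obtain ⟨-, X, hX, heX⟩ := mem_sup_inducedEdges.1 he
  exact degX_pos hX heX

end DegX

section Components

variable {d : ℕ} {V U U' Y X₁ X₂ : Finset α} {E F F₁ F₂ : Finset (Sym2 α)}

theorem CritSubgraph.iG_add_choose_eq (hsp : Sparse d V E) (h : CritSubgraph d V E U F)
    (hU : d + 2 ≤ #U) : iG E U + (d + 1).choose 2 = d * #U := by
  have hF : #F ≤ iG E U :=
    card_le_card fun e he => mem_filter.2 ⟨h.1.2.1 he, h.1.2.2 e he⟩
  have hsparse := hsp U h.1.1 (by omega)
  rcases h.2 with ⟨hU2, hF1⟩ | ⟨-, hcard⟩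
  · -- here `d = 0`, and a `0`-sparse graph has no edges
    obtain rfl : d = 0 := by omega
    simp only [zero_add, Nat.choose_succ_self, add_zero, zero_mul, nonpos_iff_eq_zero] at hsparse
    omega
  · omega

theorem CritComponent.eq_of_subset (hU : CritComponent d V E U F)
    (hU' : CritSubgraph d V E U' (inducedEdges E U')) (h : U ⊆ U') : U = U' :=
  (hU.2 U' _ hU' h fun e he => mem_filter.2 ⟨hU.1.1.2.1 he, fun v hv => h (hU.1.1.2.2 e he v hv)⟩).1

theorem iG_add_choose_lt_of_ne (hsp : Sparse d V E) (hY : Y ⊆ V) (hYcard : d + 2 ≤ #Y)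
    (h₁ : CritComponent d V E X₁ F₁) (h₂ : CritComponent d V E X₂ F₂)
    (hX₁ : X₁ ⊆ Y) (hX₂ : X₂ ⊆ Y) (hne : X₁ ≠ X₂) :
    iG E Y + (d + 1).choose 2 < d * #Y := by
  refine lt_of_le_of_ne (hsp Y hY (by omega)) fun heq => hne ?_
  have hY' : CritSubgraph d V E Y (inducedEdges E Y) :=
    ⟨⟨hY, filter_subset _ _, fun e he => (mem_filter.1 he).2⟩, Or.inr ⟨hYcard, heq⟩⟩
  rw [h₁.eq_of_subset hY' hX₁, h₂.eq_of_subset hY' hX₂]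

end Components

section Excess

variable {𝒴 : Finset (Finset α)} {W : Finset α} {E : Finset (Sym2 α)}

noncomputable def vertexExcess (𝒴 : Finset (Finset α)) (W : Finset α) : ℤ :=
  ∑ v ∈ 𝒴.sup id \ W, ((degX 𝒴 {v} : ℤ) - 1)

noncomputable def edgeExcess (E : Finset (Sym2 α)) (𝒴 : Finset (Finset α)) : ℤ :=
  ∑ e ∈ 𝒴.sup (inducedEdges E), ((degX 𝒴 e.toFinset : ℤ) - 1)

theorem sum_card_eq_card_sup_add_vertexExcess (hne : 𝒴.Nonempty) (hW : ∀ X ∈ 𝒴, W ⊆ X) :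
    ∑ X ∈ 𝒴, (#X : ℤ) = #(𝒴.sup id) + #W * (#𝒴 - 1) + vertexExcess 𝒴 W := by
  have hcount : ∑ X ∈ 𝒴, #X = ∑ v ∈ 𝒴.sup id, degX 𝒴 {v} := by
    convert sum_card_bipartiteAbove_eq_sum_card_bipartiteBelow (fun X v => v ∈ X) using 2
    · rw [bipartiteAbove, filter_mem_eq_inter, inter_eq_right.2 (le_sup (f := id) ‹_›)]
    · simp [degX, bipartiteBelow]
  have hWsup : W ⊆ 𝒴.sup id := let ⟨X, hX⟩ := hne; (hW X hX).trans (le_sup (f := id) hX)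
  have hdegW : ∀ v ∈ W, degX 𝒴 {v} = #𝒴 := fun v hv =>
    congrArg card <| filter_true_of_mem fun X hX => singleton_subset_iff.2 (hW X hX hv)
  have hsdiff : (#(𝒴.sup id \ W) : ℤ) = #(𝒴.sup id) - #W := by
    rw [card_sdiff_of_subset hWsup, Nat.cast_sub (card_le_card hWsup)]
  rw [vertexExcess, ← Nat.cast_sum, hcount, ← sum_sdiff hWsup, sum_congr rfl hdegW]
  push_cast [sum_sub_distrib, sum_const, smul_eq_mul, nsmul_eq_mul, hsdiff]
  ring

theorem sum_iG_eq_card_sup_add_edgeExcess :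
    ∑ X ∈ 𝒴, (iG E X : ℤ) = #(𝒴.sup (inducedEdges E)) + edgeExcess E 𝒴 := by
  have hcount : ∑ X ∈ 𝒴, iG E X = ∑ e ∈ 𝒴.sup (inducedEdges E), degX 𝒴 e.toFinset := by
    convert sum_card_bipartiteAbove_eq_sum_card_bipartiteBelow
      (fun X (e : Sym2 α) => e.toFinset ⊆ X) (s := 𝒴) (t := 𝒴.sup (inducedEdges E))
      using 2 with X hX
    · rw [iG, bipartiteAbove]
      congr 1
      ext e
      simp only [mem_filter, mem_inducedEdges, mem_sup_inducedEdges]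
      exact ⟨fun h => ⟨⟨h.1, X, hX, h.2⟩, h.2⟩, fun h => ⟨h.1.1, h.2⟩⟩
    · simp [degX, bipartiteBelow]
  rw [edgeExcess, ← Nat.cast_sum, hcount, sum_sub_distrib]
  simp

theorem le_edgeExcess {d c : ℕ} (hne : 𝒴.Nonempty) (hW : ∀ X ∈ 𝒴, W ⊆ X)
    (hcrit : ∀ X ∈ 𝒴, iG E X + c = d * #X)
    (hsup : iG E (𝒴.sup id) + c < d * #(𝒴.sup id)) :
    (d : ℤ) * #W * (#𝒴 - 1) + d * vertexExcess 𝒴 W - (#𝒴 - 1) * c + 1 ≤ edgeExcess E 𝒴 := by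
  have hcard := sum_card_eq_card_sup_add_vertexExcess hne hW
  have hiG := sum_iG_eq_card_sup_add_edgeExcess (E := E) (𝒴 := 𝒴)
  have hsum : ∑ X ∈ 𝒴, (iG E X : ℤ) = d * ∑ X ∈ 𝒴, (#X : ℤ) - #𝒴 * c := by
    have hX : ∀ X ∈ 𝒴, (iG E X : ℤ) = d * #X - c := fun X hX => by
      rw [eq_sub_iff_add_eq]; exact_mod_cast hcrit X hX
    rw [sum_congr rfl hX, sum_sub_distrib, mul_sum, sum_const, nsmul_eq_mul]
  have hunion : #(𝒴.sup (inducedEdges E)) ≤ iG E (𝒴.sup id) :=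
    card_le_card <| Finset.sup_le fun X hX => inducedEdges_mono (le_sup (f := id) hX)
  rw [hcard] at hsum
  zify at hsup hunion
  linarith

end Excess

section UpperBounds

variable {𝒳 𝒴 : Finset (Finset α)} {W V : Finset α} {E : Finset (Sym2 α)}

theorem sum_filter_toFinset_subset_le (s : Finset (Sym2 α)) (hs : ∀ e ∈ s, ¬ e.IsDiag)
    (hne : 𝒴.Nonempty) :
    ∑ e ∈ s with e.toFinset ⊆ W, ((degX 𝒴 e.toFinset : ℤ) - 1) ≤ (#W).choose 2 * (#𝒴 - 1) := by
  calc ∑ e ∈ s with e.toFinset ⊆ W, ((degX 𝒴 e.toFinset : ℤ) - 1)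
      ≤ ∑ _P ∈ W.powersetCard 2, ((#𝒴 : ℤ) - 1) := by
        refine sum_le_sum_of_injOn Sym2.toFinset (fun e _ e' _ h => Sym2.toFinset_inj.1 h)
          (fun e he => ?_) (fun _ _ => by simpa using hne.card_pos)
          (fun e _ => by simpa using degX_le_card)
        obtain ⟨he, heW⟩ := mem_filter.1 he
        exact mem_powersetCard.2 ⟨heW, Sym2.card_toFinset_of_not_isDiag e (hs e he)⟩
    _ = (#W).choose 2 * (#𝒴 - 1) := by rw [sum_const, card_powersetCard, nsmul_eq_mul]

theorem sum_filter_not_disjoint_not_subset_le :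
    ∑ e ∈ 𝒴.sup (inducedEdges E) with ¬ Disjoint W e.toFinset ∧ ¬ e.toFinset ⊆ W,
      ((degX 𝒴 e.toFinset : ℤ) - 1) ≤ #W * vertexExcess 𝒴 W := by
  calc _ ≤ ∑ p ∈ W ×ˢ (𝒴.sup id \ W), ((degX 𝒴 {p.2} : ℤ) - 1) := by
        refine sum_le_sum_of_forall_exists (fun p => s(p.1, p.2)) (fun e he => ?_)
          (fun p hp => by simpa using one_le_degX_singleton (mem_sdiff.1 (mem_product.1 hp).2).1)
        obtain ⟨he, hmeet, hout⟩ := mem_filter.1 he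
        induction e using Sym2.ind with | h a b => ?_
        obtain ⟨-, X, hX, habX⟩ := mem_sup_inducedEdges.1 he
        rw [Sym2.toFinset_mk_eq] at hmeet hout habX ⊢
        have hsup : ∀ v ∈ ({a, b} : Finset α), v ∈ 𝒴.sup id := fun v hv =>
          mem_sup.2 ⟨X, hX, habX hv⟩
        by_cases ha : a ∈ W
        · have hb : b ∉ W := fun hb => hout (insert_subset ha (singleton_subset_iff.2 hb))
          refine ⟨(a, b), mem_product.2 ⟨ha, mem_sdiff.2 ⟨hsup b (by simp), hb⟩⟩, rfl, ?_⟩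
          gcongr
          exact degX_anti (by simp)
        · have hb : b ∈ W := by simpa [ha] using hmeet
          refine ⟨(b, a), mem_product.2 ⟨hb, mem_sdiff.2 ⟨hsup a (by simp), ha⟩⟩,
            Sym2.eq_swap, ?_⟩
          gcongr
          exact degX_anti (by simp)
    _ = #W * vertexExcess 𝒴 W := by
        simp only [sum_product, sum_const, nsmul_eq_mul, vertexExcess]

theorem sum_theta_succ_le :
    ∑ U ∈ (theta V 𝒳 (#W + 1)).filter (fun X => W ⊂ X), ((degX 𝒳 U : ℤ) - 1) ≤
      vertexExcess (𝒳.filter (W ⊆ ·)) W := by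
  refine sum_le_sum_of_forall_exists (fun v => insert v W) (fun U hU => ?_)
    (fun v hv => by simpa using one_le_degX_singleton (mem_sdiff.1 hv).1)
  obtain ⟨hUθ, hWU⟩ := mem_filter.1 hU
  obtain ⟨-, hUcard, hUdeg⟩ : U ⊆ V ∧ #U = #W + 1 ∧ 2 ≤ degX 𝒳 U := by simpa [theta] using hUθ
  obtain ⟨v, hvW, rfl⟩ := exists_eq_insert_iff.2 ⟨hWU.subset, hUcard.symm⟩
  obtain ⟨X, hX, hvWX⟩ := exists_mem_of_degX_pos (by omega : 0 < degX 𝒳 (insert v W))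
  have hvsup : v ∈ (𝒳.filter (W ⊆ ·)).sup id :=
    mem_sup.2 ⟨X, mem_filter.2 ⟨hX, (subset_insert _ _).trans hvWX⟩, hvWX (mem_insert_self _ _)⟩
  refine ⟨v, mem_sdiff.2 ⟨hvsup, hvW⟩, rfl, ?_⟩
  rw [degX_filter_superset, ← insert_eq]

theorem sum_filter_disjoint_le (hval : ValidOn V E) (hWV : W ⊆ V) :
    ∑ e ∈ (𝒳.filter (W ⊆ ·)).sup (inducedEdges E) with Disjoint W e.toFinset,
        ((degX (𝒳.filter (W ⊆ ·)) e.toFinset : ℤ) - 1) ≤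
      ∑ U ∈ (theta V 𝒳 (#W + 2)).filter (fun X => W ⊂ X), ((degX 𝒳 U : ℤ) - 1) := by
  rw [← sum_filter_ne_zero]
  refine sum_le_sum_of_injOn (fun e => e.toFinset ∪ W) (fun e he e' he' h => ?_)
    (fun e he => ?_) (fun U hU => ?_) (fun e _ => by rw [degX_filter_superset])
  · simp only [mem_coe, mem_filter] at he he'
    rw [← Sym2.toFinset_inj, ← union_sdiff_cancel_right he.1.2.symm,
      ← union_sdiff_cancel_right he'.1.2.symm]
    exact congrArg (· \ W) h
  · simp only [mem_coe, mem_filter] at he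
    obtain ⟨⟨he, hdisj⟩, hne⟩ := he
    obtain ⟨heE, -⟩ := mem_sup_inducedEdges.1 he
    have hdeg := one_le_degX_toFinset he
    rw [degX_filter_superset] at hdeg hne
    simp only [mem_coe, mem_filter, theta, mem_powerset]
    refine ⟨⟨union_subset (fun v hv => (hval e heE).2 v (Sym2.mem_toFinset.1 hv)) hWV, ?_, ?_⟩,
      right_lt_sup.2 fun h => Sym2.toFinset_ne_empty e (disjoint_self.1 (hdisj.symm.mono_right h))⟩
    · rw [card_union_of_disjoint hdisj.symm, Sym2.card_toFinset_of_not_isDiag e (hval e heE).1,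
        add_comm]
    · omega
  · simp only [mem_filter, theta, mem_powerset] at hU
    omega

theorem edgeExcess_le (hval : ValidOn V E) (hWV : W ⊆ V) (hne : (𝒳.filter (W ⊆ ·)).Nonempty) :
    edgeExcess E (𝒳.filter (W ⊆ ·)) ≤
      (#W).choose 2 * (#(𝒳.filter (W ⊆ ·)) - 1) + #W * vertexExcess (𝒳.filter (W ⊆ ·)) W +
        ∑ U ∈ (theta V 𝒳 (#W + 2)).filter (fun X => W ⊂ X), ((degX 𝒳 U : ℤ) - 1) := by
  set 𝒴 := 𝒳.filter (W ⊆ ·)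
  have hsplit := sum_filter_add_sum_filter_not (𝒴.sup (inducedEdges E))
    (fun e => Disjoint W e.toFinset) fun e => (degX 𝒴 e.toFinset : ℤ) - 1
  have hsplit' := sum_filter_add_sum_filter_not
    ((𝒴.sup (inducedEdges E)).filter fun e => ¬ Disjoint W e.toFinset)
    (fun e => e.toFinset ⊆ W) fun e => (degX 𝒴 e.toFinset : ℤ) - 1
  have hinside := sum_filter_toFinset_subset_le (W := W)
    ((𝒴.sup (inducedEdges E)).filter fun e => ¬ Disjoint W e.toFinset)
    (fun e he => (hval e (mem_sup_inducedEdges.1 (mem_filter.1 he).1).1).1) hne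
  have hmixed := sum_filter_not_disjoint_not_subset_le (𝒴 := 𝒴) (W := W) (E := E)
  have houtside := sum_filter_disjoint_le (𝒳 := 𝒳) hval hWV
  simp only [filter_filter] at hsplit' hinside
  rw [edgeExcess]
  linarith

end UpperBounds

theorem stmt3_general (d k : ℕ) (hk : k ≤ d - 1)
    (V : Finset α) (E : Finset (Sym2 α)) (hval : ValidOn V E) (hsp : Sparse d V E)
    (𝒳 : Finset (Finset α)) (h𝒳 : 𝒳 = critCover d V E)
    (W : Finset α) (hW : W ∈ theta V 𝒳 k)
    (hbig : ∀ U F, CritComponent d V E U F → W ⊆ U → d + 2 ≤ U.card) :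
    ((d : ℤ) - k) *
        (∑ U ∈ (theta V 𝒳 (k + 1)).filter (fun X => W ⊂ X), ((degX 𝒳 U : ℤ) - 1)) -
      (∑ U ∈ (theta V 𝒳 (k + 2)).filter (fun X => W ⊂ X), ((degX 𝒳 U : ℤ) - 1)) <
      (Nat.choose (d + 1 - k) 2 : ℤ) * ((degX 𝒳 W : ℤ) - 1) := by
  obtain ⟨hWV, rfl, hdegW⟩ : W ⊆ V ∧ #W = k ∧ 2 ≤ degX 𝒳 W := by simpa [theta] using hW
  set 𝒴 := 𝒳.filter (W ⊆ ·)
  have hcomp : ∀ X ∈ 𝒴, ∃ F, CritComponent d V E X F ∧ W ⊆ X := fun X hX => by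
    obtain ⟨hX, hWX⟩ := mem_filter.1 hX
    obtain ⟨F, hF⟩ := (mem_filter.1 (h𝒳 ▸ hX)).2
    exact ⟨F, hF, hWX⟩
  have hcrit : ∀ X ∈ 𝒴, iG E X + (d + 1).choose 2 = d * #X := fun X hX =>
    let ⟨F, hF, hWX⟩ := hcomp X hX
    hF.1.iG_add_choose_eq hsp (hbig X F hF hWX)
  obtain ⟨X₁, hX₁, X₂, hX₂, hne⟩ := one_lt_card.1 hdegW
  obtain ⟨F₁, hF₁, hWX₁⟩ := hcomp X₁ hX₁
  obtain ⟨F₂, hF₂, -⟩ := hcomp X₂ hX₂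
  have hsup : iG E (𝒴.sup id) + (d + 1).choose 2 < d * #(𝒴.sup id) :=
    iG_add_choose_lt_of_ne hsp
      (Finset.sup_le fun X hX => let ⟨_, hF, _⟩ := hcomp X hX; hF.1.1.1)
      ((hbig X₁ F₁ hF₁ hWX₁).trans (card_le_card (le_sup (f := id) hX₁)))
      hF₁ hF₂ (le_sup (f := id) hX₁) (le_sup (f := id) hX₂) hne
  have hlow := le_edgeExcess ⟨X₁, hX₁⟩ (fun X hX => (mem_filter.1 hX).2) hcrit hsup
  have hup := edgeExcess_le hval hWV ⟨X₁, hX₁⟩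
  have hθ := sum_theta_succ_le (V := V) (𝒳 := 𝒳) (W := W)
  have hid : ((#W).choose 2 + (d + 1).choose 2 : ℤ) = d * #W + (d + 1 - #W).choose 2 := by
    exact_mod_cast Nat.choose_two_add_choose_two (by omega)
  have hdW : (0 : ℤ) ≤ d - #W := by omega
  change _ < _ * ((#𝒴 : ℤ) - 1)
  linarith [mul_le_mul_of_nonneg_left hθ hdW, congrArg (· * ((#𝒴 : ℤ) - 1)) hid]

/-- the key hinge inequality for a fixed hinge `W` (Lemma 3.2 of the paper). -/
theorem stmt3 (d k : ℕ) (hd : 1 ≤ d) (hk : k ≤ d - 1)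
    (V : Finset α) (E : Finset (Sym2 α)) (hval : ValidOn V E) (hsp : Sparse d V E)
    (𝒳 : Finset (Finset α)) (h𝒳 : 𝒳 = critCover d V E)
    (W : Finset α) (hW : W ∈ theta V 𝒳 k)
    (hbig : ∀ U F, CritComponent d V E U F → W ⊆ U → d + 2 ≤ U.card) :
    ((d : ℤ) - k) *
        (∑ U ∈ (theta V 𝒳 (k + 1)).filter (fun X => W ⊂ X), ((degX 𝒳 U : ℤ) - 1)) -
      (∑ U ∈ (theta V 𝒳 (k + 2)).filter (fun X => W ⊂ X), ((degX 𝒳 U : ℤ) - 1)) <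
      (Nat.choose (d + 1 - k) 2 : ℤ) * ((degX 𝒳 W : ℤ) - 1) :=
  stmt3_general d k hk V E hval hsp 𝒳 h𝒳 W hW hbig
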